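/- There exists a universal constant C > 0 such that for every integer t > 2 and every ε ∈ (0,1/2), if X_t = ∑_{i=1}^t g_i² where g_1,…,g_t are i.i.d. standard Gaussian N(0,1) random variables (so that X_t is chi-squared distributed with t degrees of freedom), then Pr( X_t < t/(1+ε) ) ≥ e^{−C·ε²·t} / t. -/

import Mathlib

open MeasureTheory ProbabilityTheory Metric
open scoped ENNReal NNReal Classical

noncomputable def gaussianJL (t d : ℕ) : Measure (Fin t → Fin d → ℝ) :=
  Measure.pi fun _ : Fin t => Measure.pi fun _ : Fin d => gaussianReal 0 (t : ℝ≥0)⁻¹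

noncomputable def appJL {t d : ℕ} (G : Fin t → Fin d → ℝ)
    (x : EuclideanSpace ℝ (Fin d)) : EuclideanSpace ℝ (Fin t) :=
  WithLp.toLp 2 fun i => ∑ j, G i j * x j

noncomputable def nearestDist {d : ℕ} (p : EuclideanSpace ℝ (Fin d))
    (C : Finset (EuclideanSpace ℝ (Fin d))) : ℝ :=
  sInf ((fun c => ‖p - c‖) '' ↑C)

noncomputable def costZ {d : ℕ} (P C : Finset (EuclideanSpace ℝ (Fin d))) (z : ℝ) : ℝ :=
  ∑ p ∈ P, nearestDist p C ^ z

noncomputable def optZ {d : ℕ} (P Q : Finset (EuclideanSpace ℝ (Fin d))) (k : ℕ) (z : ℝ) : ℝ :=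
  sInf {v | ∃ C : Finset (EuclideanSpace ℝ (Fin d)),
    C ⊆ Q ∧ C.Nonempty ∧ C.card ≤ k ∧ v = costZ P C z}

def HasDoublingDim {d : ℕ} (S : Set (EuclideanSpace ℝ (Fin d))) (m : ℝ) : Prop :=
  ∀ x ∈ S, ∀ r > 0, ∃ F : Finset (EuclideanSpace ℝ (Fin d)),
    (F.card : ℝ) ≤ (2 : ℝ) ^ m ∧
      S ∩ closedBall x r ⊆ ⋃ y ∈ F, closedBall y (r / 2)

/-! On `{x | ∑ i, x i ^ 2 < s}` the standard Gaussian density on `ℝᵗ` is at least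
`(2π)^(-t/2) e^(-s/2)`, so multiplying by the volume of this ball gives
`P(X_t < s) ≥ e^(-s/2) (s/2)^(t/2) / Γ(t/2 + 1)`. With the crude Stirling bound
`Γ(x + 1) ≤ 2x x^x e^(-x)` (by induction on `x ∈ {2, 5/2, 3, …}` from `e ≤ (1 + 1/x)^(x+1)`) and
`s = t/(1+ε)`, `r = 1/(1+ε)`, the right-hand side is at least `(r e^(1-r))^(t/2) / t`, and
`r e^(1-r) ≥ e^(-ε²)`; this proves the claim with `C = 1/2` for `t ≥ 4`.
For `t = 3` this ball bound stays below `1/3` as `ε → 0`, so there `{X_3 < 2}` is split into the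
ball of radius `1` and a shell, with a separate density bound on each, giving `P(X_3 < 2) ≥ 1/3`. -/

open Real Fintype

theorem lintegral_fin_nat_prod_eq_prod {α : Type*} [MeasurableSpace α] {n : ℕ}
    {μ : Fin n → Measure α} [∀ i, SigmaFinite (μ i)] {f : Fin n → α → ℝ≥0∞}
    (hf : ∀ i, Measurable (f i)) :
    ∫⁻ x : Fin n → α, ∏ i, f i (x i) ∂(Measure.pi μ) = ∏ i, ∫⁻ x, f i x ∂(μ i) := by
  induction n with
  | zero => simp
  | succ n ih =>
    calc
      _ = ∫⁻ x : α × (Fin n → α), f 0 x.1 * ∏ i : Fin n, f i.succ (x.2 i)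
          ∂((μ 0).prod (Measure.pi fun i ↦ μ i.succ)) := by
        rw [← ((measurePreserving_piFinSuccAbove μ 0).symm).lintegral_comp_emb
          (MeasurableEquiv.measurableEmbedding _)]
        simp_rw [MeasurableEquiv.piFinSuccAbove_symm_apply, Fin.insertNthEquiv,
          Fin.prod_univ_succ, Fin.insertNth_zero, Equiv.coe_fn_mk, Fin.cons_succ,
          Fin.zero_succAbove, cast_eq, Fin.cons_zero]
      _ = (∫⁻ x, f 0 x ∂μ 0) * ∏ i : Fin n, ∫⁻ x, f i.succ x ∂(μ i.succ) := by
        rw [← ih fun i ↦ hf i.succ]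
        exact lintegral_prod_mul (hf 0).aemeasurable
          (Finset.measurable_prod _ fun (i : Fin n) _ ↦
            (hf i.succ).comp (measurable_pi_apply i)).aemeasurable
      _ = ∏ i, ∫⁻ x, f i x ∂(μ i) := by rw [Fin.prod_univ_succ]

theorem lintegral_fintype_prod_eq_prod {α : Type*} [MeasurableSpace α] {ι : Type*} [Fintype ι]
    {μ : ι → Measure α} [∀ i, SigmaFinite (μ i)] {f : ι → α → ℝ≥0∞}
    (hf : ∀ i, Measurable (f i)) :
    ∫⁻ x : ι → α, ∏ i, f i (x i) ∂(Measure.pi μ) = ∏ i, ∫⁻ x, f i x ∂(μ i) := by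
  let e := (equivFin ι).symm
  rw [← (measurePreserving_piCongrLeft _ e).lintegral_comp_emb
    (MeasurableEquiv.measurableEmbedding _)]
  simp_rw [← e.prod_comp, MeasurableEquiv.coe_piCongrLeft, Equiv.piCongrLeft_apply_apply]
  exact lintegral_fin_nat_prod_eq_prod fun i ↦ hf (e i)

theorem MeasureTheory.Measure.pi_withDensity {α : Type*} [MeasurableSpace α] {ι : Type*}
    [Fintype ι] (μ : ι → Measure α) [∀ i, SigmaFinite (μ i)] {f : ι → α → ℝ≥0∞}
    (hf : ∀ i, Measurable (f i)) [∀ i, SigmaFinite ((μ i).withDensity (f i))] :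
    Measure.pi (fun i ↦ (μ i).withDensity (f i)) =
      (Measure.pi μ).withDensity fun x ↦ ∏ i, f i (x i) := by
  refine Measure.pi_eq fun s hs ↦ ?_
  rw [withDensity_apply _ (.univ_pi hs), Measure.restrict_pi_pi,
    lintegral_fintype_prod_eq_prod hf]
  exact Finset.prod_congr rfl fun i _ ↦ (withDensity_apply _ (hs i)).symm

section StandardGaussian

variable {ι : Type*} [Fintype ι]

theorem pi_gaussianReal_eq_withDensity :
    Measure.pi (fun _ : ι ↦ gaussianReal 0 1) = volume.withDensity fun x ↦
      ENNReal.ofReal (exp (-(∑ i, x i ^ 2) / 2) / √(2 * π) ^ card ι) := by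
  have : SigmaFinite (volume.withDensity (gaussianPDF 0 1)) :=
    SigmaFinite.withDensity_of_ne_top (ae_of_all _ fun _ ↦ gaussianPDF_ne_top)
  simp_rw [gaussianReal_of_var_ne_zero 0 one_ne_zero,
    Measure.pi_withDensity _ fun _ ↦ measurable_gaussianPDF 0 1, ← volume_pi, gaussianPDF,
    gaussianPDFReal]
  congr 1
  funext x
  rw [← ENNReal.ofReal_prod_of_nonneg fun i _ ↦ by positivity]
  congr 1
  simp only [NNReal.coe_one, mul_one, sub_zero, Finset.prod_mul_distrib, Finset.prod_const,
    Finset.card_univ, ← exp_sum, ← Finset.sum_div, Finset.sum_neg_distrib]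
  ring

theorem ofReal_mul_volume_le_pi_gaussianReal {s : ℝ} {A : Set (ι → ℝ)}
    (hA : A ⊆ {x | ∑ i, x i ^ 2 < s}) :
    ENNReal.ofReal (exp (-(s / 2)) / √(2 * π) ^ card ι) * volume A ≤
      Measure.pi (fun _ : ι ↦ gaussianReal 0 1) A := by
  rw [pi_gaussianReal_eq_withDensity, ← setLIntegral_const]
  refine (setLIntegral_mono (by fun_prop) fun x hx ↦ ?_).trans (withDensity_apply_le _ _)
  have hx : ∑ i, x i ^ 2 < s := hA hx
  gcongr
  linarith

theorem volume_setOf_sum_sq_lt [Nonempty ι] (s : ℝ) :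
    volume {x : ι → ℝ | ∑ i, x i ^ 2 < s} =
      ENNReal.ofReal (√s ^ card ι * (√π ^ card ι / Gamma (card ι / 2 + 1))) := by
  have hball : (MeasurableEquiv.toLp 2 (ι → ℝ)).symm ⁻¹' {x | ∑ i, x i ^ 2 < s} =
      Metric.ball (0 : EuclideanSpace ℝ ι) √s := by
    ext y
    simp [EuclideanSpace.norm_eq, sq_abs,
      sqrt_lt_sqrt_iff (Finset.sum_nonneg fun i _ ↦ sq_nonneg (y i))]
  rw [← (EuclideanSpace.volume_preserving_symm_measurableEquiv_toLp ι).measure_preimage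
    (measurableSet_lt (by fun_prop) measurable_const).nullMeasurableSet, hball,
    EuclideanSpace.volume_ball, ENNReal.ofReal_mul (by positivity),
    ENNReal.ofReal_pow (sqrt_nonneg s)]

theorem ofReal_le_pi_gaussianReal_shell [Nonempty ι] {s₁ s₂ : ℝ} (h : s₁ ≤ s₂) :
    ENNReal.ofReal (exp (-(s₂ / 2)) * (√(s₂ / 2) ^ card ι - √(s₁ / 2) ^ card ι) /
        Gamma (card ι / 2 + 1)) ≤
      Measure.pi (fun _ : ι ↦ gaussianReal 0 1)
        ({x | ∑ i, x i ^ 2 < s₂} \ {x | ∑ i, x i ^ 2 < s₁}) := by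
  have hsub : {x : ι → ℝ | ∑ i, x i ^ 2 < s₁} ⊆ {x | ∑ i, x i ^ 2 < s₂} :=
    Set.ofPred_subset_ofPred.mpr fun _ hx ↦ hx.trans_le h
  have hscale (s : ℝ) : √(s / 2) ^ card ι = √s ^ card ι * √π ^ card ι / √(2 * π) ^ card ι := by
    rw [sqrt_div' s zero_le_two, sqrt_mul zero_le_two, div_pow, mul_pow]
    field_simp
  refine le_trans (le_of_eq ?_) (ofReal_mul_volume_le_pi_gaussianReal fun x hx ↦ hx.1)
  rw [measure_sdiff hsub (measurableSet_lt (by fun_prop) measurable_const).nullMeasurableSet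
    (by rw [volume_setOf_sum_sq_lt]; exact ENNReal.ofReal_ne_top), volume_setOf_sum_sq_lt,
    volume_setOf_sum_sq_lt, ← ENNReal.ofReal_sub _ (by positivity),
    ← ENNReal.ofReal_mul (by positivity), hscale, hscale]
  ring_nf

theorem ofReal_le_pi_gaussianReal_sum_sq_lt [Nonempty ι] {s : ℝ} (hs : 0 ≤ s) :
    ENNReal.ofReal (exp (-(s / 2)) * √(s / 2) ^ card ι / Gamma (card ι / 2 + 1)) ≤
      Measure.pi (fun _ : ι ↦ gaussianReal 0 1) {x | ∑ i, x i ^ 2 < s} := by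
  have hempty : {x : ι → ℝ | ∑ i, x i ^ 2 < 0} = ∅ :=
    Set.eq_empty_of_forall_notMem fun x hx ↦
      (Finset.sum_nonneg fun i _ ↦ sq_nonneg (x i)).not_gt hx
  simpa [hempty, card_ne_zero] using ofReal_le_pi_gaussianReal_shell (ι := ι) hs

end StandardGaussian

theorem exp_one_mul_rpow_le {x : ℝ} (hx : 0 < x) : exp 1 * x ^ (x + 1) ≤ (x + 1) ^ (x + 1) := by
  have h : x / (x + 1) ≤ exp (-(x + 1)⁻¹) := by
    have := add_one_le_exp (-(x + 1)⁻¹)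
    rwa [show -(x + 1)⁻¹ + 1 = x / (x + 1) by field_simp; ring] at this
  have := rpow_le_rpow (by positivity) h (by positivity : 0 ≤ x + 1)
  rw [div_rpow hx.le (by positivity), ← exp_mul, show -(x + 1)⁻¹ * (x + 1) = -1 by field_simp,
    div_le_iff₀ (by positivity), exp_neg] at this
  calc exp 1 * x ^ (x + 1) ≤ exp 1 * ((exp 1)⁻¹ * (x + 1) ^ (x + 1)) := by gcongr
    _ = (x + 1) ^ (x + 1) := by field_simp

theorem Gamma_add_one_add_one_le {x : ℝ} (hx : 0 < x)
    (h : Gamma (x + 1) ≤ 2 * x * x ^ x * exp (-x)) :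
    Gamma (x + 1 + 1) ≤ 2 * (x + 1) * (x + 1) ^ (x + 1) * exp (-(x + 1)) :=
  calc Gamma (x + 1 + 1) = (x + 1) * Gamma (x + 1) := Gamma_add_one (by positivity)
    _ ≤ (x + 1) * (2 * x * x ^ x * exp (-x)) := by gcongr
    _ = 2 * (x + 1) * (exp 1 * x ^ (x + 1)) * exp (-(x + 1)) := by
      rw [rpow_add_one hx.ne', neg_add, exp_add, exp_neg 1]
      field_simp
    _ ≤ 2 * (x + 1) * (x + 1) ^ (x + 1) * exp (-(x + 1)) := by
      gcongr
      exact exp_one_mul_rpow_le hx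

theorem Gamma_half_add_one_le : ∀ n : ℕ, 4 ≤ n →
    Gamma (n / 2 + 1) ≤ 2 * (n / 2) * (n / 2 : ℝ) ^ (n / 2 : ℝ) * exp (-(n / 2))
  | 0, h | 1, h | 2, h | 3, h => absurd h (by norm_num)
  | 4, _ => by
    have he : exp 2 < 8 := by
      rw [show (2 : ℝ) = 1 + 1 by norm_num, exp_add]
      nlinarith [exp_one_lt_d9, exp_pos 1]
    rw [show ((4 : ℕ) : ℝ) / 2 = 2 by norm_num, Gamma_add_one two_ne_zero, Gamma_two, rpow_two,
      exp_neg, ← div_eq_mul_inv, le_div_iff₀ (exp_pos 2)]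
    linarith
  | 5, _ => by
    have he : exp (5 / 2) < 12.25 := by
      have h5 : exp (5 / 2) ^ 2 = exp 1 ^ 5 := by rw [← exp_nat_mul, ← exp_nat_mul]; norm_num
      have : exp 1 ^ 5 < 2.7182818286 ^ 5 := by gcongr; exact exp_one_lt_d9
      nlinarith [exp_pos (5 / 2)]
    have hpi : √π < 1.78 := by
      rw [sqrt_lt' (by norm_num)]
      linarith [pi_lt_d2]
    have hsqrt : 1.58 < √(5 / 2) := by
      rw [lt_sqrt (by norm_num)]
      norm_num
    have hGamma : Gamma (5 / 2 + 1) = 15 / 8 * √π := by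
      rw [Gamma_add_one (by norm_num), show (5 / 2 : ℝ) = 3 / 2 + 1 by norm_num,
        Gamma_add_one (by norm_num), show (3 / 2 : ℝ) = 1 / 2 + 1 by norm_num,
        Gamma_add_one (by norm_num), Gamma_one_half_eq]
      ring
    have hrpow : (5 / 2 : ℝ) ^ (5 / 2 : ℝ) = 25 / 4 * √(5 / 2) := by
      rw [show (5 / 2 : ℝ) = 2 + 1 / 2 by norm_num, rpow_add (by norm_num), rpow_two,
        ← sqrt_eq_rpow]
      norm_num
    rw [show ((5 : ℕ) : ℝ) / 2 = 5 / 2 by norm_num, hGamma, hrpow, exp_neg, ← div_eq_mul_inv,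
      le_div_iff₀ (exp_pos _)]
    nlinarith [mul_lt_mul'' hpi he (sqrt_nonneg π) (exp_pos _).le]
  | n + 6, _ => by
    have e : ((n + 6 : ℕ) : ℝ) / 2 = ((n + 4 : ℕ) : ℝ) / 2 + 1 := by push_cast; ring
    rw [e]
    exact Gamma_add_one_add_one_le (by positivity) (Gamma_half_add_one_le (n + 4) (by omega))

theorem exp_neg_sq_le_inv_mul_exp {ε : ℝ} (hε : 0 ≤ ε) :
    exp (-ε ^ 2) ≤ (1 + ε)⁻¹ * exp (1 - (1 + ε)⁻¹) := by
  have hlog : log (1 + ε) ≤ ε := by linarith [log_le_sub_one_of_pos (by positivity : 0 < 1 + ε)]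
  rw [show (1 + ε)⁻¹ * exp (1 - (1 + ε)⁻¹) = exp (-log (1 + ε) + (1 - (1 + ε)⁻¹)) by
    rw [exp_add, exp_neg, exp_log (by positivity)], exp_le_exp]
  have : ε ^ 2 / (1 + ε) ≤ ε ^ 2 := div_le_self (by positivity) (by linarith)
  have : 1 - (1 + ε)⁻¹ = ε - ε ^ 2 / (1 + ε) := by field_simp; ring
  linarith

theorem exp_neg_mul_div_le_of_four_le {n : ℕ} (hn : 4 ≤ n) {ε : ℝ} (hε : 0 ≤ ε) :
    exp (-(1 / 2 * ε ^ 2 * n)) / n ≤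
      exp (-(n / (1 + ε) / 2)) * √(n / (1 + ε) / 2) ^ n / Gamma (n / 2 + 1) := by
  set x : ℝ := n / 2 with hx_def
  set r : ℝ := (1 + ε)⁻¹
  have hx : 0 < x := by positivity
  have hr : 0 < r := by positivity
  have hs : (n : ℝ) / (1 + ε) / 2 = r * x := by ring
  have hsqrt : √(r * x) ^ n = (r * x) ^ x := by
    rw [sqrt_eq_rpow, ← rpow_natCast, ← rpow_mul (by positivity), hx_def]
    ring_nf
  calc exp (-(1 / 2 * ε ^ 2 * n)) / n = exp (-ε ^ 2) ^ x / (2 * x) := by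
        rw [← exp_mul, hx_def]
        ring_nf
    _ ≤ (r * exp (1 - r)) ^ x / (2 * x) := by
        gcongr
        exact exp_neg_sq_le_inv_mul_exp hε
    _ = exp (-(r * x)) * (r * x) ^ x / (2 * x * x ^ x * exp (-x)) := by
        rw [mul_rpow hr.le (exp_pos _).le, ← exp_mul, mul_rpow hr.le hx.le,
          show (1 - r) * x = -(r * x) - -x by ring, exp_sub]
        field_simp
    _ ≤ exp (-(r * x)) * (r * x) ^ x / Gamma (x + 1) := by
        have := Gamma_pos_of_pos (by linarith : 0 < x + 1)
        gcongr
        exact Gamma_half_add_one_le n hn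
    _ = exp (-(n / (1 + ε) / 2)) * √(n / (1 + ε) / 2) ^ n / Gamma (n / 2 + 1) := by
        rw [hs, hsqrt]

theorem ofReal_one_third_le_pi_gaussianReal_fin_three :
    ENNReal.ofReal (1 / 3) ≤
      Measure.pi (fun _ : Fin 3 ↦ gaussianReal 0 1) {x | ∑ i, x i ^ 2 < 2} := by
  have hball := ofReal_le_pi_gaussianReal_sum_sq_lt (ι := Fin 3) zero_le_one
  have hshell := ofReal_le_pi_gaussianReal_shell (ι := Fin 3) one_le_two
  simp only [card_fin, Nat.cast_ofNat] at hball hshell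
  have hGamma : Gamma (3 / 2 + 1) = 3 / 4 * √π := by
    rw [Gamma_add_one (by norm_num), show (3 / 2 : ℝ) = 1 / 2 + 1 by norm_num,
      Gamma_add_one (by norm_num), Gamma_one_half_eq]
    ring
  have hcube : √(1 / 2) ^ 3 = √(1 / 2) / 2 := by
    rw [pow_succ, sq_sqrt (by norm_num)]
    ring
  have hsqrt : 0.707 < √(1 / 2) := by rw [lt_sqrt (by norm_num)]; norm_num
  have hsqrt' : √(1 / 2) < 0.7072 := by rw [sqrt_lt' (by norm_num)]; norm_num
  have hpi : √π < 1.7725 := by rw [sqrt_lt' (by norm_num)]; linarith [pi_lt_d4]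
  have he1 := exp_neg_one_gt_d9
  have he2 : 0.6065 < exp (-(1 / 2)) := by
    have h : exp (1 / 2) ^ 2 = exp 1 := by rw [← exp_nat_mul]; norm_num
    have : exp (1 / 2) < 1.6488 := by nlinarith [exp_one_lt_d9, exp_pos (1 / 2)]
    rw [exp_neg, lt_inv_comm₀ (by norm_num) (exp_pos _)]
    linarith
  rw [hGamma, hcube] at hball hshell
  rw [div_self two_ne_zero, sqrt_one, one_pow] at hshell
  have hnum : 1 / 3 ≤ exp (-(1 / 2)) * (√(1 / 2) / 2) / (3 / 4 * √π) +
      exp (-1) * (1 - √(1 / 2) / 2) / (3 / 4 * √π) := by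
    rw [← add_div, le_div_iff₀ (by positivity)]
    nlinarith [mul_lt_mul'' he2 hsqrt (by norm_num) (by norm_num),
      mul_lt_mul'' he1 (by linarith : 0.6464 < 1 - √(1 / 2) / 2) (by norm_num) (by norm_num)]
  have hsub : {x : Fin 3 → ℝ | ∑ i, x i ^ 2 < 1} ⊆ {x | ∑ i, x i ^ 2 < 2} :=
    Set.ofPred_subset_ofPred.mpr fun _ hx ↦ hx.trans one_lt_two
  calc ENNReal.ofReal (1 / 3)
    _ ≤ ENNReal.ofReal (exp (-(1 / 2)) * (√(1 / 2) / 2) / (3 / 4 * √π) +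
          exp (-1) * (1 - √(1 / 2) / 2) / (3 / 4 * √π)) := ENNReal.ofReal_le_ofReal hnum
    _ = ENNReal.ofReal (exp (-(1 / 2)) * (√(1 / 2) / 2) / (3 / 4 * √π)) +
          ENNReal.ofReal (exp (-1) * (1 - √(1 / 2) / 2) / (3 / 4 * √π)) :=
      ENNReal.ofReal_add (by positivity) (div_nonneg (mul_nonneg (exp_pos _).le (by linarith))
        (by positivity))
    _ ≤ _ := add_le_add hball hshell
    _ = _ := by
      rw [measure_add_sdiff (measurableSet_lt (by fun_prop) measurable_const).nullMeasurableSet,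
        Set.union_eq_right.mpr hsub]

/-- Lower tail bound for the chi-squared distribution with t degrees of freedom:
Pr(X_t < t/(1+ε)) ≥ e^{−C ε² t}/t. -/
theorem chi_squared_lower_tail :
    ∃ C : ℝ, 0 < C ∧
      ∀ t : ℕ, 2 < t →
      ∀ ε : ℝ, ε ∈ Set.Ioo (0 : ℝ) (1 / 2) →
        ENNReal.ofReal (Real.exp (-(C * ε ^ 2 * t)) / t) ≤
          (Measure.pi fun _ : Fin t => gaussianReal 0 1)
            {g | ∑ i, (g i) ^ 2 < (t : ℝ) / (1 + ε)} := by
  refine ⟨1 / 2, one_half_pos, fun t ht ε ⟨hε₀, hε₁⟩ ↦ ?_⟩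
  obtain rfl | ht : t = 3 ∨ 4 ≤ t := by omega
  · have h2 : (2 : ℝ) ≤ (3 : ℕ) / (1 + ε) := by
      rw [le_div_iff₀ (by linarith)]
      push_cast
      linarith
    calc ENNReal.ofReal (exp (-(1 / 2 * ε ^ 2 * (3 : ℕ))) / (3 : ℕ))
      _ ≤ ENNReal.ofReal (1 / 3) := by
        refine ENNReal.ofReal_le_ofReal ?_
        rw [Nat.cast_ofNat, div_le_div_iff_of_pos_right three_pos, exp_le_one_iff, neg_nonpos]
        positivity
      _ ≤ _ := ofReal_one_third_le_pi_gaussianReal_fin_three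
      _ ≤ _ := measure_mono (Set.ofPred_subset_ofPred.mpr fun _ hx ↦ hx.trans_le h2)
  · have : Nonempty (Fin t) := ⟨⟨0, by omega⟩⟩
    have hball :=
      ofReal_le_pi_gaussianReal_sum_sq_lt (ι := Fin t) (s := t / (1 + ε)) (by positivity)
    rw [card_fin] at hball
    exact (ENNReal.ofReal_le_ofReal (exp_neg_mul_div_le_of_four_le ht hε₀.le)).trans hball
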